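/- Let p ∈ (0,1), n ≥ 1, x ∈ ℤⁿ, and x̃ obtained by adding i.i.d. DLap(p) noise to each coordinate. For f : ℤⁿ → ℝ with well-defined expectation and variance of f(x̃), the multivariate unbiased estimator g (with coefficients α_0 = 1 + 2p/(1-p)², α_{±1} = -p/(1-p)²) satisfies E[(g(x̃) - f(x))²] ≤ (3·((1+p²)² + 2p)/(1-p)⁴)ⁿ · E[(f(x̃) - f(x))²]. -/
import Mathlib


open scoped BigOperators



lemma cs_aux {ι : Type*} (T : Finset ι) (c u : ι → ℝ) :
    (∑ ξ ∈ T, u ξ * c ξ) ^ 2 ≤ (∑ ξ ∈ T, |c ξ|) * ∑ ξ ∈ T, |c ξ| * u ξ ^ 2 := by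
  have h1 : (∑ ξ ∈ T, u ξ * c ξ) ^ 2 ≤ (∑ ξ ∈ T, |u ξ * c ξ|) ^ 2 := by
    rw [← sq_abs (∑ ξ ∈ T, u ξ * c ξ)]
    exact pow_le_pow_left₀ (abs_nonneg _) (Finset.abs_sum_le_sum_abs _ _) 2
  refine h1.trans ?_
  have h2 : ∀ ξ ∈ T, |u ξ * c ξ| = Real.sqrt |c ξ| * (Real.sqrt |c ξ| * |u ξ|) := by
    intro ξ _
    have hc : Real.sqrt |c ξ| * Real.sqrt |c ξ| = |c ξ| := Real.mul_self_sqrt (abs_nonneg (c ξ))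
    have h3 : Real.sqrt |c ξ| * (Real.sqrt |c ξ| * |u ξ|) =
        Real.sqrt |c ξ| * Real.sqrt |c ξ| * |u ξ| := by ring
    rw [abs_mul, h3, hc]
    ring
  rw [Finset.sum_congr rfl h2]
  refine (Finset.sum_mul_sq_le_sq_mul_sq T _ _).trans_eq ?_
  congr 1
  · exact Finset.sum_congr rfl fun ξ _ => Real.sq_sqrt (abs_nonneg _)
  · refine Finset.sum_congr rfl fun ξ _ => ?_
    rw [mul_pow, Real.sq_sqrt (abs_nonneg _), sq_abs]

lemma shift_aux (p : ℝ) (hp0 : 0 < p) (hp1 : p < 1) (n : ℕ)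
    (F : (Fin n → ℤ) → ℝ) (hF : ∀ η, 0 ≤ F η)
    (hs : Summable fun η : Fin n → ℤ => (∏ j, (1 - p) / (1 + p) * p ^ |η j|) * F η)
    (ξ : Fin n → ℤ) :
    (Summable fun η : Fin n → ℤ => (∏ j, (1 - p) / (1 + p) * p ^ |η j|) * F (η + ξ)) ∧
      (∑' η : Fin n → ℤ, (∏ j, (1 - p) / (1 + p) * p ^ |η j|) * F (η + ξ)) ≤
        (∏ j, p ^ (-|ξ j|)) * ∑' η : Fin n → ℤ, (∏ j, (1 - p) / (1 + p) * p ^ |η j|) * F η := by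
  have hq : 0 < (1 - p) / (1 + p) := div_pos (by linarith) (by linarith)
  have hwpos : ∀ η : Fin n → ℤ, (0:ℝ) < ∏ j, (1 - p) / (1 + p) * p ^ |η j| :=
    fun η => Finset.prod_pos fun j _ => mul_pos hq (zpow_pos hp0 _)
  have hD : (0:ℝ) < ∏ j, p ^ (-|ξ j|) := Finset.prod_pos fun j _ => zpow_pos hp0 _
  have hshift : ∀ η : Fin n → ℤ,
      (∏ j, (1 - p) / (1 + p) * p ^ |(η - ξ) j|) ≤
        (∏ j, p ^ (-|ξ j|)) * ∏ j, (1 - p) / (1 + p) * p ^ |η j| := by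
    intro η
    rw [← Finset.prod_mul_distrib]
    refine Finset.prod_le_prod (fun j _ => mul_nonneg hq.le (zpow_pos hp0 _).le) (fun j _ => ?_)
    have h1 : |η j| - |ξ j| ≤ |(η - ξ) j| := by
      simpa [Pi.sub_apply] using abs_sub_abs_le_abs_sub (η j) (ξ j)
    calc (1 - p) / (1 + p) * p ^ |(η - ξ) j|
        ≤ (1 - p) / (1 + p) * p ^ (|η j| - |ξ j|) :=
          mul_le_mul_of_nonneg_left (zpow_le_zpow_right_of_le_one₀ hp0 hp1.le h1) hq.le
      _ = p ^ (-|ξ j|) * ((1 - p) / (1 + p) * p ^ |η j|) := by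
          rw [show |η j| - |ξ j| = |η j| + -|ξ j| from sub_eq_add_neg _ _,
            zpow_add₀ hp0.ne']; ring
  have hcomp : Summable fun η : Fin n → ℤ =>
      (∏ j, (1 - p) / (1 + p) * p ^ |(η - ξ) j|) * F η := by
    refine Summable.of_nonneg_of_le (fun η => mul_nonneg (hwpos (η - ξ)).le (hF η))
      (fun η => ?_) (hs.mul_left (∏ j, p ^ (-|ξ j|)))
    calc (∏ j, (1 - p) / (1 + p) * p ^ |(η - ξ) j|) * F η
        ≤ ((∏ j, p ^ (-|ξ j|)) * ∏ j, (1 - p) / (1 + p) * p ^ |η j|) * F η :=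
          mul_le_mul_of_nonneg_right (hshift η) (hF η)
      _ = (∏ j, p ^ (-|ξ j|)) * ((∏ j, (1 - p) / (1 + p) * p ^ |η j|) * F η) := mul_assoc _ _ _
  have hcompeq : ((fun η : Fin n → ℤ => (∏ j, (1 - p) / (1 + p) * p ^ |η j|) * F (η + ξ)) ∘
      (Equiv.subRight ξ)) = fun η : Fin n → ℤ =>
        (∏ j, (1 - p) / (1 + p) * p ^ |(η - ξ) j|) * F η := by
    funext η
    simp [Function.comp, Equiv.subRight]
  have hsummable : Summable fun η : Fin n → ℤ =>
      (∏ j, (1 - p) / (1 + p) * p ^ |η j|) * F (η + ξ) := by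
    rw [← (Equiv.subRight ξ).summable_iff, hcompeq]
    exact hcomp
  refine ⟨hsummable, ?_⟩
  have heq : (∑' η : Fin n → ℤ, (∏ j, (1 - p) / (1 + p) * p ^ |η j|) * F (η + ξ)) =
      ∑' η : Fin n → ℤ, (∏ j, (1 - p) / (1 + p) * p ^ |(η - ξ) j|) * F η := by
    rw [← (Equiv.subRight ξ).tsum_eq
      (fun η : Fin n → ℤ => (∏ j, (1 - p) / (1 + p) * p ^ |η j|) * F (η + ξ))]
    exact congrArg tsum hcompeq
  rw [heq]
  calc (∑' η : Fin n → ℤ, (∏ j, (1 - p) / (1 + p) * p ^ |(η - ξ) j|) * F η)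
      ≤ ∑' η : Fin n → ℤ, (∏ j, p ^ (-|ξ j|)) * ((∏ j, (1 - p) / (1 + p) * p ^ |η j|) * F η) := by
        refine Summable.tsum_le_tsum (fun η => ?_) hcomp (hs.mul_left _)
        calc (∏ j, (1 - p) / (1 + p) * p ^ |(η - ξ) j|) * F η
            ≤ ((∏ j, p ^ (-|ξ j|)) * ∏ j, (1 - p) / (1 + p) * p ^ |η j|) * F η :=
              mul_le_mul_of_nonneg_right (hshift η) (hF η)
          _ = (∏ j, p ^ (-|ξ j|)) * ((∏ j, (1 - p) / (1 + p) * p ^ |η j|) * F η) := mul_assoc _ _ _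
    _ = (∏ j, p ^ (-|ξ j|)) * ∑' η : Fin n → ℤ, (∏ j, (1 - p) / (1 + p) * p ^ |η j|) * F η :=
        tsum_mul_left

lemma sum3_aux (F : ℤ → ℝ) :
    ∑ t ∈ ({-1, 0, 1} : Finset ℤ), F t = F (-1) + F 0 + F 1 := by
  rw [show ({-1, 0, 1} : Finset ℤ) = insert (-1) (insert 0 {1}) from rfl,
    Finset.sum_insert (by decide), Finset.sum_insert (by decide), Finset.sum_singleton]
  ring

/-- Multivariate MSE bound for the unbiased estimator:
`MSE_g(x) ≤ (3((1+p²)² + 2p)/(1-p)⁴)ⁿ · MSE_f(x)`. -/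
theorem discrete_laplace_mse_bound_multivariate
    (p : ℝ) (hp0 : 0 < p) (hp1 : p < 1) (n : ℕ) (hn : 1 ≤ n)
    (x : Fin n → ℤ) (f : (Fin n → ℤ) → ℝ)
    (α : ℤ → ℝ)
    (hα : ∀ ξ : ℤ, α ξ = if ξ = 0 then 1 + 2 * p / (1 - p) ^ 2 else -p / (1 - p) ^ 2)
    (g : (Fin n → ℤ) → ℝ)
    (hg : ∀ y : Fin n → ℤ, g y =
      ∑ ξ ∈ Fintype.piFinset (fun _ : Fin n => ({-1, 0, 1} : Finset ℤ)),
        f (y + ξ) * ∏ j, α (ξ j))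
    (hsum1 : Summable fun η : Fin n → ℤ =>
      (∏ j, (1 - p) / (1 + p) * p ^ |η j|) * |f (x + η)|)
    (hsum2 : Summable fun η : Fin n → ℤ =>
      (∏ j, (1 - p) / (1 + p) * p ^ |η j|) * (f (x + η) - f x) ^ 2) :
    (Summable fun η : Fin n → ℤ =>
        (∏ j, (1 - p) / (1 + p) * p ^ |η j|) * (g (x + η) - f x) ^ 2) ∧
      (∑' η : Fin n → ℤ,
          (∏ j, (1 - p) / (1 + p) * p ^ |η j|) * (g (x + η) - f x) ^ 2) ≤
        (3 * ((1 + p ^ 2) ^ 2 + 2 * p) / (1 - p) ^ 4) ^ n *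
          ∑' η : Fin n → ℤ,
            (∏ j, (1 - p) / (1 + p) * p ^ |η j|) * (f (x + η) - f x) ^ 2 := by
  have h1p : (0:ℝ) < 1 - p := by linarith
  have hq : 0 < (1 - p) / (1 + p) := div_pos h1p (by linarith)
  have hwpos : ∀ η : Fin n → ℤ, (0:ℝ) < ∏ j, (1 - p) / (1 + p) * p ^ |η j| :=
    fun η => Finset.prod_pos fun j _ => mul_pos hq (zpow_pos hp0 _)
  set T := Fintype.piFinset (fun _ : Fin n => ({-1, 0, 1} : Finset ℤ)) with hT
  -- values of α
  have hαm : α (-1) = -p / (1 - p) ^ 2 := by rw [hα]; norm_num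
  have hα1 : α 1 = -p / (1 - p) ^ 2 := by rw [hα]; norm_num
  have hα0 : α 0 = 1 + 2 * p / (1 - p) ^ 2 := by rw [hα]; norm_num
  have habs1 : |(-p / (1 - p) ^ 2 : ℝ)| = p / (1 - p) ^ 2 := by
    rw [abs_of_nonpos (div_nonpos_of_nonpos_of_nonneg (by linarith) (by positivity))]
    ring
  have habs0 : |(1 + 2 * p / (1 - p) ^ 2 : ℝ)| = 1 + 2 * p / (1 - p) ^ 2 :=
    abs_of_nonneg (by positivity)
  -- sum of coefficients is 1
  have hc1 : ∑ ξ ∈ T, ∏ j, α (ξ j) = 1 := by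
    rw [hT, Finset.sum_prod_piFinset]
    have h3 : ∑ t ∈ ({-1, 0, 1} : Finset ℤ), α t = 1 := by
      rw [sum3_aux, hαm, hα0, hα1]; ring
    simp [h3]
  -- expansion of g's error
  have hgexp : ∀ η : Fin n → ℤ, g (x + η) - f x =
      ∑ ξ ∈ T, (f (x + (η + ξ)) - f x) * ∏ j, α (ξ j) := by
    intro η
    have h2 : ∑ ξ ∈ T, f x * ∏ j, α (ξ j) = f x := by
      rw [← Finset.mul_sum, hc1, mul_one]
    rw [hg (x + η)]
    simp only [sub_mul, Finset.sum_sub_distrib, h2, add_assoc]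
  -- constants
  set A1 : ℝ := p / (1 - p) ^ 2 + (1 + 2 * p / (1 - p) ^ 2) + p / (1 - p) ^ 2 with hA1
  set B1 : ℝ := p / (1 - p) ^ 2 * p⁻¹ + (1 + 2 * p / (1 - p) ^ 2) + p / (1 - p) ^ 2 * p⁻¹
    with hB1
  have hA1nn : 0 ≤ A1 := by rw [hA1]; positivity
  have hB1nn : 0 ≤ B1 := by rw [hB1]; positivity
  -- closed form for A := ∑ |c ξ|
  have habsα : ∀ t : ℤ, |α t| = if t = 0 then 1 + 2 * p / (1 - p) ^ 2 else p / (1 - p) ^ 2 := by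
    intro t
    rw [hα t]
    by_cases ht : t = 0 <;> simp [ht, habs0, habs1]
  have hA : ∑ ξ ∈ T, |∏ j, α (ξ j)| = A1 ^ n := by
    have h5 : ∀ ξ ∈ T, |∏ j, α (ξ j)| = ∏ j, |α (ξ j)| := fun ξ _ => Finset.abs_prod _ _
    rw [Finset.sum_congr rfl h5, hT]
    refine (Finset.sum_prod_piFinset ({-1, 0, 1} : Finset ℤ) (fun _ t => |α t|)).trans ?_
    have h3 : ∑ t ∈ ({-1, 0, 1} : Finset ℤ), |α t| = A1 := by
      rw [sum3_aux, habsα, habsα, habsα]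
      norm_num [hA1]
    simp [h3]
  -- closed form for B := ∑ |c ξ| * ∏ p^(-|ξ j|)
  have hB : ∑ ξ ∈ T, |∏ j, α (ξ j)| * ∏ j, p ^ (-|ξ j|) = B1 ^ n := by
    have h4 : ∀ ξ ∈ T, |∏ j, α (ξ j)| * ∏ j, p ^ (-|ξ j|)
        = ∏ j, |α (ξ j)| * p ^ (-|ξ j|) := by
      intro ξ _
      rw [Finset.abs_prod, ← Finset.prod_mul_distrib]
    rw [Finset.sum_congr rfl h4, hT]
    refine (Finset.sum_prod_piFinset ({-1, 0, 1} : Finset ℤ)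
      (fun _ t => |α t| * p ^ (-|t|))).trans ?_
    have h3 : ∑ t ∈ ({-1, 0, 1} : Finset ℤ), |α t| * p ^ (-|t|) = B1 := by
      rw [sum3_aux, habsα, habsα, habsα]
      norm_num [hB1]
    rw [h3, Finset.prod_const, Finset.card_univ, Fintype.card_fin]
  -- nonnegativity of A
  have hAnn : 0 ≤ ∑ ξ ∈ T, |∏ j, α (ξ j)| := Finset.sum_nonneg fun ξ _ => abs_nonneg _
  -- shift lemma instances
  have key : ∀ ξ : Fin n → ℤ,
      (Summable fun η : Fin n → ℤ =>
        (∏ j, (1 - p) / (1 + p) * p ^ |η j|) * (f (x + (η + ξ)) - f x) ^ 2) ∧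
      (∑' η : Fin n → ℤ,
        (∏ j, (1 - p) / (1 + p) * p ^ |η j|) * (f (x + (η + ξ)) - f x) ^ 2) ≤
        (∏ j, p ^ (-|ξ j|)) * ∑' η : Fin n → ℤ,
          (∏ j, (1 - p) / (1 + p) * p ^ |η j|) * (f (x + η) - f x) ^ 2 :=
    fun ξ => shift_aux p hp0 hp1 n (fun η => (f (x + η) - f x) ^ 2)
      (fun η => sq_nonneg _) hsum2 ξ
  -- pointwise bound
  set A : ℝ := ∑ ξ ∈ T, |∏ j, α (ξ j)| with hAdef
  have hpt : ∀ η : Fin n → ℤ,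
      (∏ j, (1 - p) / (1 + p) * p ^ |η j|) * (g (x + η) - f x) ^ 2 ≤
      ∑ ξ ∈ T, (A * |∏ j, α (ξ j)|) *
        ((∏ j, (1 - p) / (1 + p) * p ^ |η j|) * (f (x + (η + ξ)) - f x) ^ 2) := by
    intro η
    have hcs := cs_aux T (fun ξ => ∏ j, α (ξ j)) (fun ξ => f (x + (η + ξ)) - f x)
    rw [← hgexp η] at hcs
    calc (∏ j, (1 - p) / (1 + p) * p ^ |η j|) * (g (x + η) - f x) ^ 2
        ≤ (∏ j, (1 - p) / (1 + p) * p ^ |η j|) *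
            (A * ∑ ξ ∈ T, |∏ j, α (ξ j)| * (f (x + (η + ξ)) - f x) ^ 2) :=
          mul_le_mul_of_nonneg_left hcs (hwpos η).le
      _ = ∑ ξ ∈ T, (A * |∏ j, α (ξ j)|) *
            ((∏ j, (1 - p) / (1 + p) * p ^ |η j|) * (f (x + (η + ξ)) - f x) ^ 2) := by
          rw [Finset.mul_sum, Finset.mul_sum]
          exact Finset.sum_congr rfl fun ξ _ => by ring
  -- summability of the bound
  have hBsumm : Summable fun η : Fin n → ℤ =>
      ∑ ξ ∈ T, (A * |∏ j, α (ξ j)|) *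
        ((∏ j, (1 - p) / (1 + p) * p ^ |η j|) * (f (x + (η + ξ)) - f x) ^ 2) :=
    summable_sum fun ξ _ => ((key ξ).1.mul_left _)
  have hsummg : Summable fun η : Fin n → ℤ =>
      (∏ j, (1 - p) / (1 + p) * p ^ |η j|) * (g (x + η) - f x) ^ 2 :=
    Summable.of_nonneg_of_le (fun η => mul_nonneg (hwpos η).le (sq_nonneg _)) hpt hBsumm
  refine ⟨hsummg, ?_⟩
  set S : ℝ := ∑' η : Fin n → ℤ,
    (∏ j, (1 - p) / (1 + p) * p ^ |η j|) * (f (x + η) - f x) ^ 2 with hSdef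
  have hS0 : 0 ≤ S := tsum_nonneg fun η => mul_nonneg (hwpos η).le (sq_nonneg _)
  have hAB : A1 * B1 ≤ 3 * ((1 + p ^ 2) ^ 2 + 2 * p) / (1 - p) ^ 4 := by
    have h4 : (0:ℝ) < (1 - p) ^ 4 := pow_pos h1p 4
    have e1 : A1 * B1 = ((1 + p) ^ 2 * (3 + p ^ 2)) / (1 - p) ^ 4 := by
      rw [hA1, hB1]
      field_simp
      ring
    rw [e1, div_le_div_iff₀ h4 h4]
    nlinarith [sq_nonneg (p - p ^ 2), sq_nonneg p, sq_nonneg (p ^ 2), h4.le,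
      mul_pos hp0 hp0]
  calc (∑' η : Fin n → ℤ, (∏ j, (1 - p) / (1 + p) * p ^ |η j|) * (g (x + η) - f x) ^ 2)
      ≤ ∑' η : Fin n → ℤ, ∑ ξ ∈ T, (A * |∏ j, α (ξ j)|) *
          ((∏ j, (1 - p) / (1 + p) * p ^ |η j|) * (f (x + (η + ξ)) - f x) ^ 2) :=
        Summable.tsum_le_tsum hpt hsummg hBsumm
    _ = ∑ ξ ∈ T, ∑' η : Fin n → ℤ, (A * |∏ j, α (ξ j)|) *
          ((∏ j, (1 - p) / (1 + p) * p ^ |η j|) * (f (x + (η + ξ)) - f x) ^ 2) :=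
        Summable.tsum_finsetSum fun ξ _ => ((key ξ).1.mul_left _)
    _ = ∑ ξ ∈ T, (A * |∏ j, α (ξ j)|) * ∑' η : Fin n → ℤ,
          ((∏ j, (1 - p) / (1 + p) * p ^ |η j|) * (f (x + (η + ξ)) - f x) ^ 2) :=
        Finset.sum_congr rfl fun ξ _ => tsum_mul_left
    _ ≤ ∑ ξ ∈ T, (A * |∏ j, α (ξ j)|) * ((∏ j, p ^ (-|ξ j|)) * S) :=
        Finset.sum_le_sum fun ξ _ => mul_le_mul_of_nonneg_left (key ξ).2
          (mul_nonneg hAnn (abs_nonneg _))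
    _ = A * (∑ ξ ∈ T, |∏ j, α (ξ j)| * ∏ j, p ^ (-|ξ j|)) * S := by
        rw [Finset.mul_sum, Finset.sum_mul]
        exact Finset.sum_congr rfl fun ξ _ => by ring
    _ = (A1 ^ n * B1 ^ n) * S := by rw [hA, hB]
    _ = (A1 * B1) ^ n * S := by rw [mul_pow]
    _ ≤ (3 * ((1 + p ^ 2) ^ 2 + 2 * p) / (1 - p) ^ 4) ^ n * S :=
        mul_le_mul_of_nonneg_right
          (pow_le_pow_left₀ (mul_nonneg hA1nn hB1nn) hAB n) hS0
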